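/- arXiv:1312.6899 — 4 statements merged into one kernel-verified Lean document; each statement's English description precedes it below -/
import Mathlib

section
/- For every n≥1: (a) the polynomial t_n(q)∈ℝ[q] has degree at most C(n+1,2) in q (equivalently, g_{n+1}=q^{−C(n+1,2)}t_n(q) is a polynomial in 1/q of degree at most C(n+1,2)); (b) its constant term satisfies t_n(0)=τ_n, where τ_0=1 and τ_n=∑_{i=1}^{n} φ_i τ_{n−i} (i.e. t_n(0) is the coefficient of z^n in 1/(1−φ(z))); and (c) if φ_i≥0 for all i≥1, then all coefficients of t_n are nonnegative. -/
open Filter Finset Polynomial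

noncomputable section

/-- `L_i(n_1,…,n_i) = C(n,2) − ∑ C(n_j,2) + ∑ (j−1) n_j` where `n = n_1 + ⋯ + n_i`
(0-indexed tuples, so the weight of the `j`-th entry is `j`).  The value is always
nonnegative, so natural subtraction is exact. -/
def Ldeg (i : ℕ) (ns : Fin i → ℕ) : ℕ :=
  (Nat.choose (∑ j : Fin i, ns j) 2 + ∑ j : Fin i, (j : ℕ) * ns j) - ∑ j : Fin i, Nat.choose (ns j) 2

/-- The sequence of polynomials `t_n ∈ ℝ[q]`: `t_0 = 1` and for `n ≥ 1`,
`t_n = ∑_{i=1}^n φ_i ∑_{n_1+⋯+n_{i+1} = n-i} t_{n_1} ⋯ t_{n_{i+1}} q^{L_{i+1}(n_1,…,n_{i+1})}`. -/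
def IsTSeq (φ : ℕ → ℝ) (t : ℕ → Polynomial ℝ) : Prop :=
  t 0 = 1 ∧ ∀ n, 1 ≤ n →
    t n = ∑ i ∈ Finset.Icc 1 n, Polynomial.C (φ i) *
      ∑ ns ∈ Finset.Nat.antidiagonalTuple (i + 1) (n - i),
        (∏ j, t (ns j)) * Polynomial.X ^ Ldeg (i + 1) ns

/-!
All three claims follow by strong induction on `n` from the defining recursion.

For the degree, write `m = n - i = n_1 + ⋯ + n_{i+1}`. Using `C(a+1,2) = C(a,2) + a`, the degree
bound of the factors plus the exponent `L_{i+1}` add up to `C(m+1,2) + ∑ (j-1) n_j ≤ C(m+1,2) + i m`,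
which is at most `C(m+i+1,2) = C(n+1,2)`.

For the constant term, only tuples with `L_{i+1} = 0` survive at `q = 0`. Since `C(·,2)` is
superadditive, this forces `∑ (j-1) n_j = 0`, i.e. the tuple is `(m, 0, …, 0)`, which contributes
`t_m(0) = τ_m`; this is exactly the renewal recursion for `τ`.

Nonnegativity holds because polynomials with nonnegative coefficients form a subsemiring.
-/

namespace Nat

theorem add_choose_two (a b : ℕ) : (a + b).choose 2 = a.choose 2 + a * b + b.choose 2 := by
  induction b with
  | zero => simp
  | succ b ih =>
    rw [← Nat.add_assoc, Nat.choose_succ_succ', ih, Nat.choose_succ_succ', Nat.choose_one_right,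
      Nat.choose_one_right]
    ring

theorem choose_two_add_choose_two_le (a b : ℕ) : a.choose 2 + b.choose 2 ≤ (a + b).choose 2 := by
  rw [add_choose_two]
  omega

theorem sum_choose_two_le_choose_two_sum {ι : Type*} (s : Finset ι) (f : ι → ℕ) :
    ∑ j ∈ s, (f j).choose 2 ≤ (∑ j ∈ s, f j).choose 2 := by
  induction s using Finset.cons_induction with
  | empty => simp
  | cons a s _ ih =>
    rw [sum_cons, sum_cons]
    exact (Nat.add_le_add_left ih _).trans (choose_two_add_choose_two_le _ _)

end Nat

theorem Finset.Nat.lt_of_mem_antidiagonalTuple_sub {n i : ℕ} (hi : i ∈ Icc 1 n)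
    {ns : Fin (i + 1) → ℕ} (hns : ns ∈ Finset.Nat.antidiagonalTuple (i + 1) (n - i))
    (j : Fin (i + 1)) : ns j < n := by
  have h_le : ns j ≤ n - i := Finset.Nat.mem_antidiagonalTuple.1 hns ▸
    single_le_sum (fun _ _ => Nat.zero_le _) (mem_univ j)
  have := mem_Icc.1 hi
  omega

theorem sum_choose_two_add_one_add_Ldeg_le {i : ℕ} (ns : Fin (i + 1) → ℕ) :
    ∑ j, (ns j + 1).choose 2 + Ldeg (i + 1) ns ≤ (∑ j, ns j + i + 1).choose 2 := by
  unfold Ldeg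
  set m := ∑ j, ns j
  have h_choose : ∑ j, (ns j).choose 2 ≤ m.choose 2 := Nat.sum_choose_two_le_choose_two_sum _ _
  have h_weight : ∑ j : Fin (i + 1), (j : ℕ) * ns j ≤ i * m := by
    rw [mul_sum]
    exact sum_le_sum fun j _ => Nat.mul_le_mul_right _ (Nat.lt_succ_iff.1 j.isLt)
  have h_succ : ∑ j, (ns j + 1).choose 2 = ∑ j, (ns j).choose 2 + m := by
    simp only [Nat.add_choose_two, Nat.choose_succ_self, mul_one, add_zero, sum_add_distrib, m]
  have h_total : (m + i + 1).choose 2 = m.choose 2 + i * m + m + i.choose 2 + i := by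
    rw [Nat.add_assoc, Nat.add_choose_two, Nat.add_choose_two, Nat.choose_succ_self]
    ring
  rw [h_succ, h_total]
  omega

theorem Ldeg_single_zero (i m : ℕ) : Ldeg (i + 1) (Pi.single 0 m) = 0 := by
  simp [Ldeg, Fin.sum_univ_succ, Pi.single_apply]

theorem eq_single_zero_of_Ldeg_eq_zero {i : ℕ} {ns : Fin (i + 1) → ℕ}
    (h : Ldeg (i + 1) ns = 0) : ns = Pi.single 0 (∑ j, ns j) := by
  have h_choose := Nat.sum_choose_two_le_choose_two_sum univ ns
  have h_weight : ∑ j : Fin (i + 1), (j : ℕ) * ns j = 0 := by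
    unfold Ldeg at h
    omega
  have h_tail (j : Fin i) : ns j.succ = 0 := by
    have := (sum_eq_zero_iff.1 h_weight) j.succ (mem_univ _)
    simpa [Fin.val_succ] using this
  funext j
  cases j using Fin.cases with
  | zero => simp [Fin.sum_univ_succ, h_tail]
  | succ j => simp [h_tail, Fin.succ_ne_zero]

def nonnegCoeffs (R : Type*) [Semiring R] [PartialOrder R] [IsOrderedRing R] :
    Subsemiring R[X] where
  carrier := {p | ∀ k, 0 ≤ p.coeff k}
  mul_mem' hp hq k := by
    rw [coeff_mul]
    exact sum_nonneg fun x _ => mul_nonneg (hp _) (hq _)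
  one_mem' k := by
    rw [coeff_one]
    split_ifs <;> simp
  add_mem' hp hq k := by
    rw [coeff_add]
    exact add_nonneg (hp k) (hq k)
  zero_mem' k := by simp

section nonnegCoeffs

variable {R : Type*} [Semiring R] [PartialOrder R] [IsOrderedRing R]

theorem mem_nonnegCoeffs {p : R[X]} : p ∈ nonnegCoeffs R ↔ ∀ k, 0 ≤ p.coeff k := Iff.rfl

theorem C_mem_nonnegCoeffs {a : R} (ha : 0 ≤ a) : C a ∈ nonnegCoeffs R := fun k => by
  rw [coeff_C]
  split_ifs <;> simp [ha]

theorem X_mem_nonnegCoeffs : (X : R[X]) ∈ nonnegCoeffs R := fun k => by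
  rw [coeff_X]
  split_ifs <;> simp

end nonnegCoeffs

theorem coeff_zero_sum_antidiagonalTuple_mul_X_pow_Ldeg {R : Type*} [CommSemiring R]
    {t : ℕ → R[X]} (ht0 : t 0 = 1) (i m : ℕ) :
    (∑ ns ∈ Finset.Nat.antidiagonalTuple (i + 1) m,
      (∏ j, t (ns j)) * X ^ Ldeg (i + 1) ns).coeff 0 = (t m).coeff 0 := by
  rw [finsetSum_coeff, sum_eq_single_of_mem (Pi.single 0 m)]
  · simp [Ldeg_single_zero, Fin.prod_univ_succ, ht0]
  · simp [Finset.Nat.mem_antidiagonalTuple]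
  · intro ns hns hne
    rw [coeff_mul_X_pow', if_neg]
    intro hL
    have := eq_single_zero_of_Ldeg_eq_zero (Nat.le_zero.1 hL)
    rw [Finset.Nat.mem_antidiagonalTuple.1 hns] at this
    exact hne this

namespace IsTSeq

variable {φ : ℕ → ℝ} {t : ℕ → ℝ[X]}

theorem natDegree_le (ht : IsTSeq φ t) (n : ℕ) : (t n).natDegree ≤ (n + 1).choose 2 := by
  induction n using Nat.strong_induction_on with
  | _ n ih =>
  rcases n.eq_zero_or_pos with rfl | hn
  · simp [ht.1]
  rw [ht.2 n hn]
  refine natDegree_sum_le_of_forall_le _ _ fun i hi => natDegree_C_mul_le _ _ |>.trans ?_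
  refine natDegree_sum_le_of_forall_le _ _ fun ns hns => ?_
  calc ((∏ j, t (ns j)) * X ^ Ldeg (i + 1) ns).natDegree
      ≤ ∑ j, (t (ns j)).natDegree + Ldeg (i + 1) ns :=
        natDegree_mul_le.trans (add_le_add (natDegree_prod_le _ _) (natDegree_X_pow_le _))
    _ ≤ ∑ j, (ns j + 1).choose 2 + Ldeg (i + 1) ns := by
        gcongr with j
        exact ih _ (Finset.Nat.lt_of_mem_antidiagonalTuple_sub hi hns j)
    _ ≤ (∑ j, ns j + i + 1).choose 2 := sum_choose_two_add_one_add_Ldeg_le ns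
    _ = (n + 1).choose 2 := by
        rw [Finset.Nat.mem_antidiagonalTuple.1 hns, Nat.sub_add_cancel (mem_Icc.1 hi).2]

theorem coeff_zero_eq {τ : ℕ → ℝ} (ht : IsTSeq φ t) (hτ0 : τ 0 = 1)
    (hτ : ∀ n, 1 ≤ n → τ n = ∑ i ∈ Icc 1 n, φ i * τ (n - i)) (n : ℕ) : (t n).coeff 0 = τ n := by
  induction n using Nat.strong_induction_on with
  | _ n ih =>
  rcases n.eq_zero_or_pos with rfl | hn
  · simp [ht.1, hτ0]
  rw [ht.2 n hn, hτ n hn, finsetSum_coeff]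
  refine sum_congr rfl fun i hi => ?_
  rw [coeff_C_mul, coeff_zero_sum_antidiagonalTuple_mul_X_pow_Ldeg ht.1,
    ih _ (Nat.sub_lt hn (mem_Icc.1 hi).1)]

theorem mem_nonnegCoeffs (ht : IsTSeq φ t) (hφ : ∀ i, 1 ≤ i → 0 ≤ φ i) (n : ℕ) :
    t n ∈ nonnegCoeffs ℝ := by
  induction n using Nat.strong_induction_on with
  | _ n ih =>
  rcases n.eq_zero_or_pos with rfl | hn
  · exact ht.1 ▸ one_mem _
  rw [ht.2 n hn]
  refine sum_mem fun i hi => mul_mem (C_mem_nonnegCoeffs (hφ i (mem_Icc.1 hi).1)) ?_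
  refine sum_mem fun ns hns => mul_mem ?_ (pow_mem X_mem_nonnegCoeffs _)
  exact prod_mem fun j _ => ih _ (Finset.Nat.lt_of_mem_antidiagonalTuple_sub hi hns j)

end IsTSeq

theorem stmt1_general (φ : ℕ → ℝ) (t : ℕ → Polynomial ℝ) (τ : ℕ → ℝ)
    (ht : IsTSeq φ t)
    (hτ0 : τ 0 = 1) (hτ : ∀ n, 1 ≤ n → τ n = ∑ i ∈ Finset.Icc 1 n, φ i * τ (n - i)) :
    ∀ n : ℕ, 1 ≤ n →
      (t n).natDegree ≤ Nat.choose (n + 1) 2 ∧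
      (t n).coeff 0 = τ n ∧
      ((∀ i, 1 ≤ i → 0 ≤ φ i) → ∀ k, 0 ≤ (t n).coeff k) := fun n _ =>
  ⟨ht.natDegree_le n, ht.coeff_zero_eq hτ0 hτ n,
    fun hφ => mem_nonnegCoeffs.1 (ht.mem_nonnegCoeffs hφ n)⟩

/-- for `n ≥ 1`, (a) `t_n` has degree at most `C(n+1,2)` in `q`;
(b) its constant term is the renewal sequence value `τ_n`, i.e. the coefficient of
`z^n` in `1/(1−φ(z))`; (c) if all `φ_i ≥ 0` (`i ≥ 1`) then all coefficients of `t_n`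
are nonnegative. -/
theorem stmt1 (φ : ℕ → ℝ) (t : ℕ → Polynomial ℝ) (τ : ℕ → ℝ)
    (hφ0 : φ 0 = 0) (ht : IsTSeq φ t)
    (hτ0 : τ 0 = 1) (hτ : ∀ n, 1 ≤ n → τ n = ∑ i ∈ Finset.Icc 1 n, φ i * τ (n - i)) :
    ∀ n : ℕ, 1 ≤ n →
      (t n).natDegree ≤ Nat.choose (n + 1) 2 ∧
      (t n).coeff 0 = τ n ∧
      ((∀ i, 1 ≤ i → 0 ≤ φ i) → ∀ k, 0 ≤ (t n).coeff k) :=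
  stmt1_general φ t τ ht hτ0 hτ
end
end

section
/- Let j<k≤i be positive integers and (n_1,…,n_i) a tuple of nonnegative integers with n_k≥1. Then L_i(n_1,…,n_i) = L_i(R_{j,k}(n_1,…,n_i)) + n_j − n_k − j + k + 1, and L_i(n_1,…,n_i) = L_i(τ_{j,k}(n_1,…,n_i)) + (k−j)(n_k − n_j). -/
/-! Both `R_{j,k}` and `τ_{j,k}` change only the entries `j` and `k` and keep the total `n`, so
`C(n,2)` is unchanged and each of the other two sums changes by its `j`-th and `k`-th terms only.
The raising identity then follows from `C(m+1,2) = C(m,2) + m`. -/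

open Finset

/-- `L_i(n_1,…,n_i) = C(n,2) − ∑ C(n_l,2) + ∑ (l−1) n_l` where `n = n_1 + ⋯ + n_i`,
as an integer (0-indexed tuples, so the weight of the `l`-th entry is `l`). -/
def LdegZ (i : ℕ) (ns : Fin i → ℕ) : ℤ :=
  (Nat.choose (∑ l : Fin i, ns l) 2 : ℤ) + ∑ l : Fin i, (l : ℕ) * (ns l : ℤ)
    - ∑ l : Fin i, (Nat.choose (ns l) 2 : ℤ)

open Function

theorem Finset.sum_apply_update_add {ι α M : Type*} [Fintype ι] [DecidableEq ι]
    [AddCommMonoid M] (F : ι → α → M) (g : ι → α) (j : ι) (a : α) :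
    ∑ l, F l (update g j a l) + F j (g j) = ∑ l, F l (g l) + F j a := by
  simp only [apply_update F g j a, sum_update_of_mem (mem_univ j), sdiff_singleton_eq_erase,
    ← add_sum_erase _ _ (mem_univ j)]
  ac_rfl

theorem Finset.sum_apply_update_update_add {ι α M : Type*} [Fintype ι] [DecidableEq ι]
    [AddCommMonoid M] (F : ι → α → M) (g : ι → α) {j k : ι} (hjk : j ≠ k) (a b : α) :
    ∑ l, F l (update (update g j a) k b l) + F j (g j) + F k (g k)
      = ∑ l, F l (g l) + F j a + F k b := by
  have h₂ := sum_apply_update_add F (update g j a) k b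
  rw [update_of_ne hjk.symm] at h₂
  rw [add_right_comm, h₂, add_right_comm, sum_apply_update_add]

theorem Nat.choose_two_succ (n : ℕ) : (n + 1).choose 2 = n.choose 2 + n := by
  rw [Nat.choose_succ_succ, Nat.choose_one_right, add_comm]

theorem LdegZ_update_update {i : ℕ} (ns : Fin i → ℕ) {j k : Fin i} (hjk : j ≠ k) (a b : ℕ)
    (hab : a + b = ns j + ns k) :
    LdegZ i (update (update ns j a) k b) =
      LdegZ i ns + (j : ℕ) * ((a : ℤ) - ns j) + (k : ℕ) * ((b : ℤ) - ns k)
        - ((a.choose 2 : ℤ) - (ns j).choose 2) - ((b.choose 2 : ℤ) - (ns k).choose 2) := by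
  have htotal : ∑ l, update (update ns j a) k b l = ∑ l, ns l := by
    have := sum_apply_update_update_add (fun _ x => x) ns hjk a b
    omega
  have hweight :=
    sum_apply_update_update_add (fun (l : Fin i) (x : ℕ) => ((l : ℕ) : ℤ) * x) ns hjk a b
  have hchoose := sum_apply_update_update_add (fun _ x => (x.choose 2 : ℤ)) ns hjk a b
  unfold LdegZ
  rw [htotal]
  linear_combination hweight - hchoose

/-- for `j < k ≤ i` and `n_k ≥ 1`, the raising operator `R_{j,k}`
(increase the `j`-th entry by 1, decrease the `k`-th by 1) and the transposition
`τ_{j,k}` change `L_i` by `L_i = L_i∘R_{j,k} + n_j − n_k − j + k + 1` and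
`L_i = L_i∘τ_{j,k} + (k − j)(n_k − n_j)`. -/
theorem stmt10 (i : ℕ) (ns : Fin i → ℕ) (j k : Fin i) (hjk : j < k) (hk : 1 ≤ ns k) :
    LdegZ i ns =
      LdegZ i (Function.update (Function.update ns j (ns j + 1)) k (ns k - 1))
        + (ns j : ℤ) - (ns k : ℤ) - ((j : ℕ) : ℤ) + ((k : ℕ) : ℤ) + 1 ∧
    LdegZ i ns =
      LdegZ i (ns ∘ Equiv.swap j k)
        + (((k : ℕ) : ℤ) - ((j : ℕ) : ℤ)) * ((ns k : ℤ) - (ns j : ℤ)) := by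
  obtain ⟨m, hm⟩ : ∃ m, ns k = m + 1 := ⟨ns k - 1, by omega⟩
  constructor
  · rw [LdegZ_update_update ns hjk.ne _ _ (by omega), hm, Nat.add_sub_cancel,
      Nat.choose_two_succ, Nat.choose_two_succ]
    push_cast
    ring
  · rw [Equiv.swap_comm, Equiv.comp_swap_eq_update,
      LdegZ_update_update ns hjk.ne _ _ (add_comm _ _)]
    ring
end

section
/- Let ρ∈(0,1], let L≥0 be real, let (Φ_n)_{n≥1} be a sequence of positive reals such that (nΦ_n)_{n≥1} is regularly varying of index 1−ρ (i.e. for every λ>0, lim_{n→∞} (⌊λn⌋·Φ_{⌊λn⌋})/(n·Φ_n)=λ^{1−ρ}), and let (t_n)_{n≥0} be a nonnegative real sequence such that (i) lim_{n→∞} ρΦ_n·∑_{i=0}^{n−1} t_i = L and (ii) liminf_{n→∞} nΦ_n t_n ≥ L. Then (nΦ_n t_n) converges to L on a set of integers of density 1: for every δ>0, lim_{n→∞} (1/n)·#{ i : 1≤i≤n, |iΦ_i t_i − L| ≥ δ } = 0. -/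
/-!
Write `b n = n Φ n`. By (ii), for large `i` an index with `|b i t i - L| ≥ δ` has
`b i t i ≥ L + δ`. Indices `i < n` with `b i > 2 b n` have density zero: this is dominated
convergence for `x ↦ 1{b ⌊x n⌋ > 2 b n}` on `(0, 1]`, as `b ⌊x n⌋ / b n → x ^ (1 - ρ) ≤ 1`.
Fatou's lemma for `x ↦ b n / b ⌊x n⌋ → x ^ (ρ - 1)` gives
`liminf ρ (b n / n) ∑_{N ≤ i < n} 1 / b i ≥ ρ ∫₀¹ x ^ (ρ - 1) dx = 1`. Hence the bound
`t i ≥ (L - ε) / b i` alone makes `ρ Φ n ∑_{i<n} t i` at least about `L`, and if a proportion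
`β` of the indices below `n` had `b i t i ≥ L + δ` and `b i ≤ 2 b n`, each would add
`δ / (2 b n)` more, pushing `ρ Φ n ∑_{i<n} t i` to about `L + ρ β δ / 2`, against (i).
-/

open Filter Finset MeasureTheory Topology
open scoped Classical ENNReal

lemma Nat.floor_mul_natCast_eq_iff {n : ℕ} (hn : 0 < n) {x : ℝ} (hx : 0 ≤ x) (i : ℕ) :
    ⌊x * n⌋₊ = i ↔ x ∈ Set.Ico ((i : ℝ) / n) ((i + 1) / n) := by
  have hn' : (0 : ℝ) < n := by exact_mod_cast hn
  rw [Nat.floor_eq_iff (by positivity), Set.mem_Ico, div_le_iff₀ hn', lt_div_iff₀ hn']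

lemma lintegral_Ioc_floor_mul (g : ℕ → ℝ≥0∞) {n : ℕ} (hn : 0 < n) :
    ∫⁻ x in Set.Ioc (0 : ℝ) 1, g ⌊x * n⌋₊ = (∑ i ∈ range n, g i) / n := by
  have hn' : (0 : ℝ) < n := by exact_mod_cast hn
  have hcover : Set.Ico (0 : ℝ) 1 = ⋃ i ∈ range n, Set.Ico ((i : ℝ) / n) ((i + 1) / n) := by
    ext x
    simp only [Set.mem_iUnion, mem_range, exists_prop]
    constructor
    · rintro ⟨hx0, hx1⟩
      refine ⟨⌊x * n⌋₊, ?_, (Nat.floor_mul_natCast_eq_iff hn hx0 _).1 rfl⟩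
      exact (Nat.floor_lt (by positivity)).2 (by nlinarith)
    · rintro ⟨i, hi, hx⟩
      have hi' : (i : ℝ) + 1 ≤ n := by exact_mod_cast hi
      exact ⟨le_trans (by positivity) hx.1, hx.2.trans_le ((div_le_one hn').2 hi')⟩
  have hdisj : Set.PairwiseDisjoint ↑(range n)
      fun i : ℕ => Set.Ico ((i : ℝ) / n) ((i + 1) / n) := by
    intro i _ j _ hij
    refine Set.disjoint_left.2 fun x hxi hxj => hij ?_
    have hx : 0 ≤ x := le_trans (by positivity) hxi.1
    rw [← Nat.floor_mul_natCast_eq_iff hn hx] at hxi hxj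
    exact hxi.symm.trans hxj
  rw [setLIntegral_congr Ioc_ae_eq_Icc, ← setLIntegral_congr Ico_ae_eq_Icc, hcover,
    lintegral_biUnion_finset hdisj fun _ _ => measurableSet_Ico, ENNReal.div_eq_inv_mul,
    mul_sum]
  refine sum_congr rfl fun i _ => ?_
  rw [setLIntegral_congr_fun measurableSet_Ico fun x hx =>
    congrArg g ((Nat.floor_mul_natCast_eq_iff hn (le_trans (by positivity) hx.1) i).2 hx),
    setLIntegral_const, Real.volume_Ico, mul_comm]
  congr 1
  rw [← sub_div, add_sub_cancel_left, one_div, ENNReal.ofReal_inv_of_pos hn',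
    ENNReal.ofReal_natCast]

lemma measurable_comp_floor_mul {β : Type*} [MeasurableSpace β] (g : ℕ → β) (n : ℕ) :
    Measurable fun x : ℝ => g ⌊x * n⌋₊ :=
  measurable_from_nat.comp (Nat.measurable_floor.comp (measurable_id.mul_const _))

lemma lintegral_le_liminf_sum_div {g : ℕ → ℕ → ℝ≥0∞} {f : ℝ → ℝ≥0∞}
    (hg : ∀ x ∈ Set.Ioc (0 : ℝ) 1, Tendsto (fun n => g n ⌊x * n⌋₊) atTop (𝓝 (f x))) :
    ∫⁻ x in Set.Ioc (0 : ℝ) 1, f x ≤ liminf (fun n : ℕ => (∑ i ∈ range n, g n i) / n) atTop :=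
  calc ∫⁻ x in Set.Ioc (0 : ℝ) 1, f x
      = ∫⁻ x in Set.Ioc (0 : ℝ) 1, liminf (fun n => g n ⌊x * n⌋₊) atTop :=
        setLIntegral_congr_fun measurableSet_Ioc fun x hx => (hg x hx).liminf_eq.symm
    _ ≤ liminf (fun n => ∫⁻ x in Set.Ioc (0 : ℝ) 1, g n ⌊x * n⌋₊) atTop :=
        lintegral_liminf_le fun n => measurable_comp_floor_mul (g n) n
    _ = liminf (fun n : ℕ => (∑ i ∈ range n, g n i) / n) atTop :=
        liminf_congr ((eventually_gt_atTop 0).mono fun n hn => lintegral_Ioc_floor_mul (g n) hn)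

lemma tendsto_sum_div_of_tendsto {g : ℕ → ℕ → ℝ≥0∞} {f : ℝ → ℝ≥0∞} {C : ℝ≥0∞} (hC : C ≠ ∞)
    (hgC : ∀ n i, g n i ≤ C)
    (hg : ∀ x ∈ Set.Ioc (0 : ℝ) 1, Tendsto (fun n => g n ⌊x * n⌋₊) atTop (𝓝 (f x))) :
    Tendsto (fun n : ℕ => (∑ i ∈ range n, g n i) / n) atTop
      (𝓝 (∫⁻ x in Set.Ioc (0 : ℝ) 1, f x)) := by
  refine (tendsto_lintegral_of_dominated_convergence (fun _ => C)
    (fun n => measurable_comp_floor_mul (g n) n) (fun n => ae_of_all _ fun x => hgC n _)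
    (by simp [hC]) ((ae_restrict_iff' measurableSet_Ioc).2 (ae_of_all _ hg))).congr' ?_
  exact (eventually_gt_atTop 0).mono fun n hn => lintegral_Ioc_floor_mul (g n) hn

lemma tendsto_card_filter_div_of_eventually_not {P : ℕ → ℕ → Prop}
    (hP : ∀ x ∈ Set.Ioc (0 : ℝ) 1, ∀ᶠ n in atTop, ¬ P n ⌊x * n⌋₊) :
    Tendsto (fun n : ℕ => (#{i ∈ range n | P n i} : ℝ) / n) atTop (𝓝 0) := by
  have h := tendsto_sum_div_of_tendsto (g := fun n i => if P n i then 1 else 0) (f := 0)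
    ENNReal.one_ne_top (fun n i => by split_ifs <;> simp) fun x hx =>
      tendsto_const_nhds.congr' ((hP x hx).mono fun n hn => (if_neg hn).symm)
  simp only [sum_boole, Pi.zero_apply, lintegral_zero] at h
  refine ((ENNReal.tendsto_toReal ENNReal.zero_ne_top).comp h).congr fun n => ?_
  simp [ENNReal.toReal_div]

lemma eventually_lt_sum_div_of_lt_lintegral {u : ℕ → ℕ → ℝ} {f : ℝ → ℝ}
    (hu : ∀ᶠ n in atTop, ∀ i, 0 ≤ u n i)
    (hlim : ∀ x ∈ Set.Ioc (0 : ℝ) 1, Tendsto (fun n => u n ⌊x * n⌋₊) atTop (𝓝 (f x))) {c : ℝ}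
    (hc : ENNReal.ofReal c < ∫⁻ x in Set.Ioc (0 : ℝ) 1, ENNReal.ofReal (f x)) :
    ∀ᶠ n in atTop, c < (∑ i ∈ range n, u n i) / n := by
  have hfatou := lintegral_le_liminf_sum_div (g := fun n i => ENNReal.ofReal (u n i)) fun x hx =>
    (ENNReal.continuous_ofReal.tendsto _).comp (hlim x hx)
  filter_upwards [eventually_lt_of_lt_liminf (hc.trans_le hfatou), hu, eventually_gt_atTop 0]
    with n hn hun hn0
  rw [← ENNReal.ofReal_sum_of_nonneg fun i _ => hun i, ← ENNReal.ofReal_natCast,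
    ← ENNReal.ofReal_div_of_pos (by exact_mod_cast hn0)] at hn
  exact (ENNReal.ofReal_lt_ofReal_iff'.1 hn).1

lemma lintegral_Ioc_ofReal_rpow_sub_one {ρ : ℝ} (hρ : 0 < ρ) :
    ∫⁻ x in Set.Ioc (0 : ℝ) 1, ENNReal.ofReal (x ^ (ρ - 1)) = ENNReal.ofReal (1 / ρ) := by
  rw [← ofReal_integral_eq_lintegral_ofReal, ← intervalIntegral.integral_of_le zero_le_one,
    integral_rpow (Or.inl (by linarith))]
  · simp [Real.zero_rpow hρ.ne']
  · exact (intervalIntegral.intervalIntegrable_rpow' (by linarith)).1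
  · exact (ae_restrict_mem measurableSet_Ioc).mono fun x hx => Real.rpow_nonneg hx.1.le _

lemma add_card_mul_le_sum {s G : Finset ℕ} (hG : G ⊆ s) {b t : ℕ → ℝ} {a δ B : ℝ}
    (hb : ∀ i ∈ s, 0 < b i) (hbB : ∀ i ∈ G, b i ≤ B) (hδ : 0 ≤ δ)
    (hs : ∀ i ∈ s, a ≤ b i * t i) (hGt : ∀ i ∈ G, a + δ ≤ b i * t i) :
    a * ∑ i ∈ s, 1 / b i + #G * (δ / B) ≤ ∑ i ∈ s, t i := by
  have hterm : ∀ i ∈ s, a * (1 / b i) + (if i ∈ G then δ / B else 0) ≤ t i := by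
    intro i hi
    have hbi := hb i hi
    split_ifs with hiG
    · calc a * (1 / b i) + δ / B ≤ (a + δ) / b i := by
            rw [add_div, mul_one_div]
            gcongr
            exact hbB i hiG
        _ ≤ t i := by rw [div_le_iff₀ hbi, mul_comm]; exact hGt i hiG
    · rw [add_zero, mul_one_div, div_le_iff₀ hbi, mul_comm]
      exact hs i hi
  calc a * ∑ i ∈ s, 1 / b i + #G * (δ / B)
      = ∑ i ∈ s, (a * (1 / b i) + if i ∈ G then δ / B else 0) := by
        rw [sum_add_distrib, mul_sum, sum_ite_mem, inter_eq_right.2 hG, sum_const, nsmul_eq_mul]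
    _ ≤ ∑ i ∈ s, t i := sum_le_sum hterm

lemma eventually_lt_mul_sum_Ico_one_div {ρ c : ℝ} {b : ℕ → ℝ} (hρ : 0 < ρ) (hc : c < 1)
    (hb : ∀ n, 0 < n → 0 < b n)
    (hRV : ∀ x ∈ Set.Ioc (0 : ℝ) 1,
      Tendsto (fun n : ℕ => b ⌊x * n⌋₊ / b n) atTop (𝓝 (x ^ (1 - ρ))))
    {N : ℕ} (hN : 0 < N) :
    ∀ᶠ n in atTop, c < ρ * (b n / n) * ∑ i ∈ Ico N n, 1 / b i := by
  have hlim : ∀ x ∈ Set.Ioc (0 : ℝ) 1, Tendsto (fun n : ℕ => if N ≤ ⌊x * n⌋₊ then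
      b n / b ⌊x * n⌋₊ else 0) atTop (𝓝 (x ^ (ρ - 1))) := by
    intro x hx
    have hinv := (hRV x hx).inv₀ (Real.rpow_pos_of_pos hx.1 _).ne'
    rw [← Real.rpow_neg hx.1.le, neg_sub] at hinv
    refine (hinv.congr fun n => inv_div _ _).congr' ?_
    filter_upwards [(tendsto_nat_floor_mul_atTop x hx.1).eventually_ge_atTop N] with n hn
    exact (if_pos hn).symm
  have hnonneg : ∀ᶠ n in atTop, ∀ i, 0 ≤ if N ≤ i then b n / b i else 0 := by
    filter_upwards [eventually_gt_atTop 0] with n hn i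
    split_ifs with hi
    · exact div_nonneg (hb n hn).le (hb i (by omega)).le
    · exact le_rfl
  have hc' : ENNReal.ofReal (c / ρ) < ∫⁻ x in Set.Ioc (0 : ℝ) 1, ENNReal.ofReal (x ^ (ρ - 1)) := by
    rw [lintegral_Ioc_ofReal_rpow_sub_one hρ, ENNReal.ofReal_lt_ofReal_iff (by positivity)]
    gcongr
  filter_upwards [eventually_lt_sum_div_of_lt_lintegral hnonneg hlim hc'] with n hn
  rw [← sum_filter, range_eq_Ico, Ico_filter_le_of_left_le (Nat.zero_le _), div_lt_iff₀ hρ] at hn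
  calc c < (∑ i ∈ Ico N n, b n / b i) / n * ρ := hn
    _ = ρ * (b n / n) * ∑ i ∈ Ico N n, 1 / b i := by
      simp only [mul_sum, mul_one_div, sum_div, sum_mul]
      exact sum_congr rfl fun i _ => by ring

lemma eventually_card_excess_le {ρ L δ β : ℝ} {b t : ℕ → ℝ} (hρ : 0 < ρ) (hL : 0 ≤ L)
    (hδ : 0 < δ) (hβ : 0 < β) (hb : ∀ n, 0 < n → 0 < b n)
    (hRV : ∀ x ∈ Set.Ioc (0 : ℝ) 1,
      Tendsto (fun n : ℕ => b ⌊x * n⌋₊ / b n) atTop (𝓝 (x ^ (1 - ρ))))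
    (ht : ∀ n, 0 ≤ t n)
    (hCesaro : Tendsto (fun n : ℕ => ρ * (b n / n) * ∑ i ∈ range n, t i) atTop (𝓝 L))
    (hliminf : ∀ ε > 0, ∀ᶠ n in atTop, L - ε ≤ b n * t n) :
    ∀ᶠ N in atTop, ∀ᶠ n in atTop,
      (#{i ∈ Ico N n | L + δ ≤ b i * t i ∧ b i ≤ 2 * b n} : ℝ) ≤ β * n := by
  obtain ⟨ε, hε_def⟩ : ∃ ε, ε = ρ * β * δ / 8 := ⟨_, rfl⟩
  have hε : 0 < ε := by rw [hε_def]; positivity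
  obtain ⟨N₀, hN₀⟩ := eventually_atTop.1 (hliminf ε hε)
  filter_upwards [eventually_ge_atTop (max N₀ 1)] with N hN
  have hbIco : ∀ n, ∀ i ∈ Ico N n, 0 < b i := fun n i hi =>
    hb i (by have := (mem_Ico.1 hi).1; omega)
  filter_upwards [eventually_lt_mul_sum_Ico_one_div hρ
      ((div_lt_one (by positivity)).2 (lt_add_of_pos_right L hε)) hb hRV (by omega : 0 < N),
    hCesaro.eventually_lt_const (lt_add_of_pos_right L hε), eventually_gt_atTop 0]
    with n hF hC hn
  set G := {i ∈ Ico N n | L + δ ≤ b i * t i ∧ b i ≤ 2 * b n}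
  set S := ∑ i ∈ Ico N n, 1 / b i
  -- `a ≥ 0` lets the lower bound on `ρ (b n / n) S` be multiplied through
  set a := max (L - ε) 0
  have hgood : ∀ i ∈ Ico N n, a ≤ b i * t i := fun i hi =>
    max_le (hN₀ i (by have := (mem_Ico.1 hi).1; omega)) (mul_nonneg (hbIco n i hi).le (ht i))
  have hbad : ∀ i ∈ G, a + δ ≤ b i * t i := fun i hi =>
    le_trans (by gcongr; exact max_le (by linarith) hL) (mem_filter.1 hi).2.1
  have hsum : a * S + #G * (δ / (2 * b n)) ≤ ∑ i ∈ range n, t i :=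
    (add_card_mul_le_sum (filter_subset _ _) (hbIco n) (fun i hi => (mem_filter.1 hi).2.2)
      hδ.le hgood hbad).trans <|
    sum_le_sum_of_subset_of_nonneg (fun i hi => mem_range.2 (mem_Ico.1 hi).2) fun i _ _ => ht i
  have hlow : L - 2 * ε ≤ a * (ρ * (b n / n) * S) :=
    calc L - 2 * ε ≤ (L - ε) * (L / (L + ε)) := by
          rw [mul_div_assoc', le_div_iff₀ (by positivity)]
          nlinarith
      _ ≤ a * (L / (L + ε)) := by gcongr; exact le_max_left _ _
      _ ≤ a * (ρ * (b n / n) * S) := by gcongr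
  have hbn := hb n hn
  have hn' : (0 : ℝ) < n := by exact_mod_cast hn
  have hup : a * (ρ * (b n / n) * S) + ρ * δ / 2 * (#G / n) < L + ε :=
    calc a * (ρ * (b n / n) * S) + ρ * δ / 2 * (#G / n)
        = ρ * (b n / n) * (a * S + #G * (δ / (2 * b n))) := by field_simp
      _ ≤ ρ * (b n / n) * ∑ i ∈ range n, t i := by gcongr
      _ < L + ε := hC
  have hG : ρ * δ / 2 * (#G / n) < ρ * δ / 2 * (3 / 4 * β) := by linarith
  have := (div_lt_iff₀ hn').1 (lt_of_mul_lt_mul_left hG (by positivity))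
  nlinarith

lemma tendsto_card_filter_two_mul_lt_div_zero {ρ : ℝ} {b : ℕ → ℝ} (hρ1 : ρ ≤ 1)
    (hb : ∀ n, 0 < n → 0 < b n)
    (hRV : ∀ x ∈ Set.Ioc (0 : ℝ) 1,
      Tendsto (fun n : ℕ => b ⌊x * n⌋₊ / b n) atTop (𝓝 (x ^ (1 - ρ)))) :
    Tendsto (fun n : ℕ => (#{i ∈ range n | 2 * b n < b i} : ℝ) / n) atTop (𝓝 0) := by
  refine tendsto_card_filter_div_of_eventually_not fun x hx => ?_
  have hlt : x ^ (1 - ρ) < 2 :=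
    (Real.rpow_le_one hx.1.le hx.2 (by linarith)).trans_lt one_lt_two
  filter_upwards [(hRV x hx).eventually_lt_const hlt, eventually_gt_atTop 0] with n h hn
  rw [div_lt_iff₀ (hb n hn)] at h
  linarith

lemma eventually_card_deviation_le {ρ L δ β : ℝ} {b t : ℕ → ℝ} (hρ : 0 < ρ) (hρ1 : ρ ≤ 1)
    (hL : 0 ≤ L) (hδ : 0 < δ) (hβ : 0 < β) (hb : ∀ n, 0 < n → 0 < b n)
    (hRV : ∀ x ∈ Set.Ioc (0 : ℝ) 1,
      Tendsto (fun n : ℕ => b ⌊x * n⌋₊ / b n) atTop (𝓝 (x ^ (1 - ρ))))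
    (ht : ∀ n, 0 ≤ t n)
    (hCesaro : Tendsto (fun n : ℕ => ρ * (b n / n) * ∑ i ∈ range n, t i) atTop (𝓝 L))
    (hliminf : ∀ ε > 0, ∀ᶠ n in atTop, L - ε ≤ b n * t n) :
    ∀ᶠ n in atTop, (#{i ∈ Icc 1 n | δ ≤ |b i * t i - L|} : ℝ) ≤ β * n := by
  have hβ3 : 0 < β / 3 := by positivity
  obtain ⟨N₁, hN₁⟩ := eventually_atTop.1 (hliminf (δ / 2) (half_pos hδ))
  obtain ⟨N, hG, hN⟩ := ((eventually_card_excess_le hρ hL hδ hβ3 hb hRV ht hCesaro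
    hliminf).and (eventually_ge_atTop N₁)).exists
  filter_upwards [hG, (tendsto_card_filter_two_mul_lt_div_zero hρ1 hb hRV).eventually_le_const hβ3,
    (tendsto_natCast_atTop_atTop.const_mul_atTop hβ3).eventually_ge_atTop ((N : ℝ) + 1),
    eventually_gt_atTop 0] with n hGn hFn hNn hn
  set G := {i ∈ Ico N n | L + δ ≤ b i * t i ∧ b i ≤ 2 * b n}
  set F := {i ∈ range n | 2 * b n < b i}
  have hsub : {i ∈ Icc 1 n | δ ≤ |b i * t i - L|} ⊆ range N ∪ {n} ∪ G ∪ F := by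
    intro i hi
    obtain ⟨hi, hdev⟩ := mem_filter.1 hi
    obtain ⟨hi1, hin⟩ := mem_Icc.1 hi
    simp only [mem_union, mem_range, mem_singleton, G, F, mem_filter, mem_Ico]
    by_cases hiN : i < N
    · tauto
    by_cases hin' : i = n
    · tauto
    have hup : L + δ ≤ b i * t i := by
      have := hN₁ i (by omega)
      rcases le_abs'.1 hdev with h | h <;> linarith
    by_cases hbi : 2 * b n < b i
    · exact Or.inr ⟨by omega, hbi⟩
    · exact Or.inl (Or.inr ⟨⟨by omega, by omega⟩, hup, not_lt.1 hbi⟩)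
  have hcard : (#{i ∈ Icc 1 n | δ ≤ |b i * t i - L|} : ℝ) ≤ N + 1 + #G + #F := by
    have : #(range N ∪ {n} ∪ G ∪ F) ≤ N + 1 + #G + #F :=
      calc #(range N ∪ {n} ∪ G ∪ F) ≤ #(range N) + #{n} + #G + #F := by
            grw [card_union_le, card_union_le, card_union_le]
        _ = N + 1 + #G + #F := by rw [card_range, card_singleton]
    exact_mod_cast (card_le_card hsub).trans this
  rw [div_le_iff₀ (by exact_mod_cast hn)] at hFn
  linarith

/-- abstract density lemma: let `ρ ∈ (0,1]`, `L ≥ 0`, `(Φ_n)` positive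
with `(nΦ_n)` regularly varying of index `1 − ρ`, and `(t_n)` nonnegative with
(i) `ρΦ_n ∑_{i<n} t_i → L` and (ii) `liminf nΦ_n t_n ≥ L` (expressed as: for every
`ε > 0`, eventually `L − ε ≤ nΦ_n t_n`).  Then `(nΦ_n t_n)` converges to `L` on a
set of integers of density 1. -/
theorem stmt16 (ρ L : ℝ) (Φ t : ℕ → ℝ)
    (hρ0 : 0 < ρ) (hρ1 : ρ ≤ 1) (hL : 0 ≤ L)
    (hΦpos : ∀ n : ℕ, 1 ≤ n → 0 < Φ n)
    (hRV : ∀ l : ℝ, 0 < l →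
      Tendsto (fun n : ℕ => ((⌊l * (n : ℝ)⌋₊ : ℝ) * Φ ⌊l * (n : ℝ)⌋₊) / ((n : ℝ) * Φ n))
        atTop (nhds (l ^ (1 - ρ))))
    (htnonneg : ∀ n, 0 ≤ t n)
    (hCesaro : Tendsto (fun n : ℕ => ρ * Φ n * ∑ i ∈ Finset.range n, t i)
      atTop (nhds L))
    (hliminf : ∀ ε : ℝ, 0 < ε → ∀ᶠ n : ℕ in atTop, L - ε ≤ (n : ℝ) * Φ n * t n) :
    ∀ δ : ℝ, 0 < δ →
      Tendsto (fun n : ℕ =>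
          (((Finset.Icc 1 n).filter fun i : ℕ =>
            δ ≤ |(i : ℝ) * Φ i * t i - L|).card : ℝ) / n)
        atTop (nhds 0) := by
  intro δ hδ
  have hb : ∀ n : ℕ, 0 < n → 0 < (n : ℝ) * Φ n := fun n hn =>
    mul_pos (Nat.cast_pos.2 hn) (hΦpos n hn)
  have hCesaro' : Tendsto (fun n : ℕ => ρ * ((n : ℝ) * Φ n / n) * ∑ i ∈ range n, t i)
      atTop (𝓝 L) :=
    hCesaro.congr' <| (eventually_gt_atTop 0).mono fun n hn => by
      dsimp only
      rw [mul_div_cancel_left₀ _ (Nat.cast_ne_zero.2 hn.ne')]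
  refine tendsto_order.2 ⟨fun a ha => Eventually.of_forall fun n => ha.trans_le (by positivity),
    fun a ha => ?_⟩
  filter_upwards [eventually_card_deviation_le hρ0 hρ1 hL hδ (half_pos ha) hb
    (fun x hx => hRV x hx.1) htnonneg hCesaro' hliminf, eventually_gt_atTop 0] with n h hn
  rw [div_lt_iff₀ (by exact_mod_cast hn)]
  linarith [mul_pos ha (Nat.cast_pos.2 hn : (0 : ℝ) < n)]
end

section
/- Let q>1 and let (φ_n)_{n≥1} be real numbers such that the series ∑_{j≥1} |φ_j|·q^{−j²/2}·z^j converges for every z>0. Define the sequence (h_k)_{k≥0} by h_0=1 and, for k≥1, (q^{−k}−1)·h_k = ∑_{m=0}^{k−1} φ_{k−m}·q^{−(k−m+1)(k+m)/2}·h_m. Then ∑_{k≥0} |h_k|·x^k < ∞ for every x>0; that is, h(z)=∑_{k≥0} h_k z^k has infinite radius of convergence. -/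
open Finset

/-!
Since `(k - m + 1)(k + m)/2 ≥ k + (j² - j)/2` for `j = k - m`, the recursion gives
`|h_k| q^k ≤ ∑_{m<k} c_{k-m} |h_m|` with `c_j = C |φ_j| q^{(j - j²)/2}`, `C = (1 - q⁻¹)⁻¹`,
and the hypothesis on `φ` says exactly that `∑ c_j y^j` converges for every `y > 0`.
Multiplying by `y^k` and summing, the Cauchy product shows that convergence of `∑ |h_k| y^k`
implies convergence of `∑ |h_k| (q y)^k`. A crude bound `|h_k| ≤ |h_0| K^k` gives convergence
for small `y`, and iterating the step reaches every `x > 0`.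
-/

section ConvolutionInequality

variable {a c : ℕ → ℝ} {q : ℝ}

theorem sum_range_sub_le_tsum (hc : ∀ j, 0 ≤ c j) (hcs : Summable c) (k : ℕ) :
    ∑ m ∈ range k, c (k - m) ≤ ∑' j, c j :=
  calc ∑ m ∈ range k, c (k - m) = ∑ j ∈ (range k).image (k - ·), c j :=
        (sum_image fun m hm m' hm' hmm' => by
          simp only [coe_range, Set.mem_Iio] at hm hm'; omega).symm
    _ ≤ ∑' j, c j := hcs.sum_le_tsum _ fun j _ => hc j

theorem le_mul_pow_of_le_sum_mul (hc : ∀ j, 0 ≤ c j) (hcs : Summable c) (ha0 : 0 ≤ a 0)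
    (hrec : ∀ k, 1 ≤ k → a k ≤ ∑ m ∈ range k, c (k - m) * a m) (k : ℕ) :
    a k ≤ a 0 * (∑' j, c j + 1) ^ k := by
  set K := ∑' j, c j + 1
  have hK : 1 ≤ K := le_add_of_nonneg_left (tsum_nonneg hc)
  induction k using Nat.strong_induction_on with
  | _ k ih =>
    rcases Nat.eq_zero_or_pos k with rfl | hk
    · simp
    have hterm : ∀ m ∈ range k, c (k - m) * a m ≤ c (k - m) * (a 0 * K ^ (k - 1)) := by
      intro m hm
      rw [mem_range] at hm
      exact mul_le_mul_of_nonneg_left ((ih m hm).trans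
        (mul_le_mul_of_nonneg_left (pow_le_pow_right₀ hK (by omega)) ha0)) (hc _)
    calc a k ≤ ∑ m ∈ range k, c (k - m) * a m := hrec k hk
      _ ≤ (∑ m ∈ range k, c (k - m)) * (a 0 * K ^ (k - 1)) := by
          rw [sum_mul]; exact sum_le_sum hterm
      _ ≤ K * (a 0 * K ^ (k - 1)) := by
          gcongr
          exact (sum_range_sub_le_tsum hc hcs k).trans (le_add_of_nonneg_right zero_le_one)
      _ = a 0 * K ^ k := by rw [mul_left_comm, ← pow_succ', Nat.sub_add_cancel hk]

theorem summable_mul_pow_mul_of_summable_mul_pow (ha : ∀ k, 0 ≤ a k) (hc : ∀ j, 0 ≤ c j)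
    (hrec : ∀ k, 1 ≤ k → a k * q ^ k ≤ ∑ m ∈ range k, c (k - m) * a m) (hq : 0 ≤ q)
    {y : ℝ} (hy : 0 ≤ y)
    (hcy : Summable fun j => c j * y ^ j) (hay : Summable fun k => a k * y ^ k) :
    Summable fun k => a k * (q * y) ^ k := by
  have hconv : Summable fun k => ∑ m ∈ range (k + 1), a m * y ^ m * (c (k - m) * y ^ (k - m)) :=
    summable_sum_mul_range_of_summable_mul (f := fun m => a m * y ^ m)
      (g := fun j => c j * y ^ j) <| hay.mul_of_nonneg hcy
        (fun k => mul_nonneg (ha k) (pow_nonneg hy k))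
        (fun j => mul_nonneg (hc j) (pow_nonneg hy j))
  refine (hconv.add hay).of_nonneg_of_le (fun k => ?_) (fun k => ?_)
  · exact mul_nonneg (ha k) (pow_nonneg (mul_nonneg hq hy) k)
  rcases Nat.eq_zero_or_pos k with rfl | hk
  · simp only [pow_zero, mul_one, zero_add, range_one, sum_singleton, Nat.sub_self]
    exact le_add_of_nonneg_left (mul_nonneg (ha 0) (hc 0))
  calc a k * (q * y) ^ k = a k * q ^ k * y ^ k := by ring
    _ ≤ (∑ m ∈ range k, c (k - m) * a m) * y ^ k := by gcongr; exact hrec k hk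
    _ = ∑ m ∈ range k, a m * y ^ m * (c (k - m) * y ^ (k - m)) := by
        rw [sum_mul]
        refine sum_congr rfl fun m hm => ?_
        rw [← pow_mul_pow_sub y (mem_range.1 hm).le]
        ring
    _ ≤ ∑ m ∈ range (k + 1), a m * y ^ m * (c (k - m) * y ^ (k - m)) :=
        sum_le_sum_of_subset_of_nonneg (range_subset_range.2 k.le_succ)
          fun m _ _ => mul_nonneg (mul_nonneg (ha m) (pow_nonneg hy m))
            (mul_nonneg (hc _) (pow_nonneg hy _))
    _ ≤ _ := le_add_of_nonneg_right (mul_nonneg (ha k) (pow_nonneg hy k))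

theorem summable_mul_pow_of_mul_pow_le_sum (ha : ∀ k, 0 ≤ a k) (hc : ∀ j, 0 ≤ c j)
    (hrec : ∀ k, 1 ≤ k → a k * q ^ k ≤ ∑ m ∈ range k, c (k - m) * a m) (hq : 1 < q)
    (hcs : ∀ y, 0 < y → Summable fun j => c j * y ^ j) (x : ℝ) (hx : 0 < x) :
    Summable fun k => a k * x ^ k := by
  set K := ∑' j, c j + 1
  have hK : 0 < K := add_pos_of_nonneg_of_pos (tsum_nonneg hc) one_pos
  have hbound : ∀ k, a k ≤ a 0 * K ^ k :=
    le_mul_pow_of_le_sum_mul hc (by simpa using hcs 1 one_pos) (ha 0) fun k hk =>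
      (le_mul_of_one_le_right (ha k) (one_le_pow₀ hq.le)).trans (hrec k hk)
  have hsmall : Summable fun k => a k * (2 * K)⁻¹ ^ k := by
    refine (summable_geometric_two.mul_left (a 0)).of_nonneg_of_le
      (fun k => by have := ha k; positivity) fun k => ?_
    calc a k * (2 * K)⁻¹ ^ k ≤ a 0 * K ^ k * (2 * K)⁻¹ ^ k := by gcongr; exact hbound k
      _ = a 0 * (1 / 2) ^ k := by rw [mul_assoc, ← mul_pow]; field_simp
  have hiter : ∀ n : ℕ, Summable fun k => a k * (q ^ n * (2 * K)⁻¹) ^ k := by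
    intro n
    induction n with
    | zero => simpa using hsmall
    | succ n ih =>
      simpa only [pow_succ', mul_assoc] using
        summable_mul_pow_mul_of_summable_mul_pow ha hc hrec (by positivity) (by positivity)
          (hcs _ (by positivity)) ih
  obtain ⟨n, hn⟩ := pow_unbounded_of_one_lt (x * (2 * K)) hq
  have hxn : x ≤ q ^ n * (2 * K)⁻¹ := by
    rw [← div_eq_mul_inv, le_div_iff₀ (by positivity)]; exact hn.le
  exact (hiter n).of_nonneg_of_le (fun k => by have := ha k; positivity)
    fun k => mul_le_mul_of_nonneg_left (pow_le_pow_left₀ hx.le hxn k) (ha k)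

end ConvolutionInequality

section QRecursion

variable {q : ℝ} {φ : ℕ → ℝ}

/-- For `j = k - m`, the factor `q^{-(j+1)(k+m)/2}` of the recursion is at most
`q^{(j - j²)/2} q^{-k}`, and `(1 - q^{-k})⁻¹ ≤ (1 - q⁻¹)⁻¹` for `k ≥ 1`. -/
noncomputable def kernelCoeff (q : ℝ) (φ : ℕ → ℝ) (j : ℕ) : ℝ :=
  (1 - q⁻¹)⁻¹ * |φ j| * q ^ (((j : ℝ) - (j : ℝ) ^ 2) / 2)

theorem kernelCoeff_nonneg (hq : 1 ≤ q) (j : ℕ) : 0 ≤ kernelCoeff q φ j :=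
  mul_nonneg (mul_nonneg (inv_nonneg.2 (sub_nonneg.2 (inv_le_one_of_one_le₀ hq))) (abs_nonneg _))
    (Real.rpow_nonneg (zero_le_one.trans hq) _)

theorem summable_kernelCoeff_mul_pow (hq : 0 < q)
    (hφ : ∀ z : ℝ, 0 < z →
      Summable fun j : ℕ => |φ j| * q ^ (-((j : ℝ) ^ 2) / 2) * z ^ j)
    {y : ℝ} (hy : 0 < y) : Summable fun j => kernelCoeff q φ j * y ^ j := by
  refine ((hφ (q ^ (1 / 2 : ℝ) * y) (by positivity)).mul_left (1 - q⁻¹)⁻¹).congr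
    fun j => ?_
  have hsplit : q ^ (((j : ℝ) - (j : ℝ) ^ 2) / 2) =
      q ^ (-((j : ℝ) ^ 2) / 2) * (q ^ (1 / 2 : ℝ)) ^ j := by
    rw [← Real.rpow_natCast (q ^ (1 / 2 : ℝ)) j, ← Real.rpow_mul hq.le, ← Real.rpow_add hq]
    ring_nf
  rw [kernelCoeff, hsplit, mul_pow]
  ring

theorem natCast_sub_exponent_le {k m : ℕ} (hmk : m < k) :
    (k : ℝ) - ((k - m + 1) * (k + m) / 2 : ℕ) ≤
      (((k - m : ℕ) : ℝ) - ((k - m : ℕ) : ℝ) ^ 2) / 2 := by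
  have heven : (k - m + 1) * (k + m) / 2 * 2 = (k - m + 1) * (k + m) :=
    Nat.div_two_mul_two_of_even (by rw [Nat.even_mul, Nat.even_iff, Nat.even_iff]; omega)
  have hreal : (((k - m + 1) * (k + m) / 2 : ℕ) : ℝ) * 2 = ((k : ℝ) - m + 1) * (k + m) := by
    rw [← Nat.cast_sub hmk.le]; exact_mod_cast heven
  -- with `j = k - m`: `(j + 1)(k + m) = 2k + j² - j + 2mj`
  rw [Nat.cast_sub hmk.le]
  nlinarith [mul_nonneg (Nat.cast_nonneg (α := ℝ) m) (sub_nonneg.2 (Nat.cast_le.2 hmk.le))]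

theorem abs_mul_pow_le_sum_kernelCoeff {h : ℕ → ℝ} (hq : 1 < q)
    (hrec : ∀ k : ℕ, 1 ≤ k →
      ((q ^ k)⁻¹ - 1) * h k =
        ∑ m ∈ range k, φ (k - m) * h m / q ^ ((k - m + 1) * (k + m) / 2))
    {k : ℕ} (hk : 1 ≤ k) :
    |h k| * q ^ k ≤ ∑ m ∈ range k, kernelCoeff q φ (k - m) * |h m| := by
  have hq0 : 0 < q := zero_lt_one.trans hq
  have hC0 : 0 < 1 - q⁻¹ := sub_pos.2 (inv_lt_one_of_one_lt₀ hq)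
  have hterm : ∀ m ∈ range k, q ^ k * |φ (k - m) * h m / q ^ ((k - m + 1) * (k + m) / 2)| ≤
      |φ (k - m)| * q ^ ((((k - m : ℕ) : ℝ) - ((k - m : ℕ) : ℝ) ^ 2) / 2) * |h m| := by
    intro m hm
    have hexp : q ^ k / q ^ ((k - m + 1) * (k + m) / 2) ≤
        q ^ ((((k - m : ℕ) : ℝ) - ((k - m : ℕ) : ℝ) ^ 2) / 2) := by
      rw [← Real.rpow_natCast q k, ← Real.rpow_natCast q ((k - m + 1) * (k + m) / 2),
        ← Real.rpow_sub hq0]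
      exact Real.rpow_le_rpow_of_exponent_le hq.le (natCast_sub_exponent_le (mem_range.1 hm))
    rw [abs_div, abs_mul, abs_of_pos (pow_pos hq0 _)]
    calc q ^ k * (|φ (k - m)| * |h m| / q ^ ((k - m + 1) * (k + m) / 2))
        = |φ (k - m)| * (q ^ k / q ^ ((k - m + 1) * (k + m) / 2)) * |h m| := by ring
      _ ≤ _ := by gcongr
  have hsum : (q ^ k - 1) * |h k| ≤
      ∑ m ∈ range k,
        |φ (k - m)| * q ^ ((((k - m : ℕ) : ℝ) - ((k - m : ℕ) : ℝ) ^ 2) / 2) * |h m| :=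
    calc (q ^ k - 1) * |h k| = q ^ k * |((q ^ k)⁻¹ - 1) * h k| := by
          rw [abs_mul, abs_of_nonpos (sub_nonpos.2 (inv_le_one_of_one_le₀ (one_le_pow₀ hq.le)))]
          field_simp
          ring
      _ = q ^ k * |∑ m ∈ range k, φ (k - m) * h m / q ^ ((k - m + 1) * (k + m) / 2)| := by
          rw [hrec k hk]
      _ ≤ ∑ m ∈ range k, q ^ k * |φ (k - m) * h m / q ^ ((k - m + 1) * (k + m) / 2)| :=
          (mul_le_mul_of_nonneg_left (abs_sum_le_sum_abs _ _) (by positivity)).trans_eq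
            (mul_sum _ _ _)
      _ ≤ _ := sum_le_sum hterm
  have hC : q ^ k ≤ (1 - q⁻¹)⁻¹ * (q ^ k - 1) := by
    rw [← div_eq_inv_mul, le_div_iff₀ hC0]
    have : 1 ≤ q ^ k * q⁻¹ := by
      rw [← div_eq_mul_inv, one_le_div hq0]; exact le_self_pow₀ hq.le (by omega)
    rw [mul_sub, mul_one]
    linarith
  calc |h k| * q ^ k ≤ (1 - q⁻¹)⁻¹ * (q ^ k - 1) * |h k| := by
        rw [mul_comm]; exact mul_le_mul_of_nonneg_right hC (abs_nonneg _)
    _ ≤ (1 - q⁻¹)⁻¹ * ∑ m ∈ range k,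
          |φ (k - m)| * q ^ ((((k - m : ℕ) : ℝ) - ((k - m : ℕ) : ℝ) ^ 2) / 2) * |h m| := by
        rw [mul_assoc]
        exact mul_le_mul_of_nonneg_left hsum (inv_nonneg.2 hC0.le)
    _ = ∑ m ∈ range k, kernelCoeff q φ (k - m) * |h m| := by
        simp only [mul_sum, kernelCoeff, mul_assoc]

end QRecursion

theorem stmt19_general (q : ℝ) (φ : ℕ → ℝ) (h : ℕ → ℝ)
    (hq : 1 < q)
    (hGevrey : ∀ z : ℝ, 0 < z →
      Summable fun j : ℕ => |φ j| * q ^ (-((j : ℝ) ^ 2) / 2) * z ^ j)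
    (hrec : ∀ k : ℕ, 1 ≤ k →
      ((q ^ k)⁻¹ - 1) * h k =
        ∑ m ∈ Finset.range k, φ (k - m) * h m / q ^ ((k - m + 1) * (k + m) / 2)) :
    ∀ x : ℝ, 0 < x → Summable fun k : ℕ => |h k| * x ^ k :=
  summable_mul_pow_of_mul_pow_le_sum (fun k => abs_nonneg (h k)) (kernelCoeff_nonneg hq.le)
    (fun _ hk => abs_mul_pow_le_sum_kernelCoeff hq hrec hk) hq
    (fun _ hy => summable_kernelCoeff_mul_pow (zero_lt_one.trans hq) hGevrey hy)

/-- let `q > 1` and `(φ_n)` with `∑_{j≥1} |φ_j| q^{−j²/2} z^j < ∞` for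
every `z > 0`.  If `h_0 = 1` and for `k ≥ 1`,
`(q^{−k} − 1) h_k = ∑_{m=0}^{k−1} φ_{k−m} q^{−(k−m+1)(k+m)/2} h_m`
(the exponent `(k−m+1)(k+m)` is even, so division by 2 is exact), then
`∑_k |h_k| x^k < ∞` for every `x > 0`: `h` has infinite radius of convergence. -/
theorem stmt19 (q : ℝ) (φ : ℕ → ℝ) (h : ℕ → ℝ)
    (hq : 1 < q)
    (hGevrey : ∀ z : ℝ, 0 < z →
      Summable fun j : ℕ => |φ j| * q ^ (-((j : ℝ) ^ 2) / 2) * z ^ j)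
    (h0 : h 0 = 1)
    (hrec : ∀ k : ℕ, 1 ≤ k →
      ((q ^ k)⁻¹ - 1) * h k =
        ∑ m ∈ Finset.range k, φ (k - m) * h m / q ^ ((k - m + 1) * (k + m) / 2)) :
    ∀ x : ℝ, 0 < x → Summable fun k : ℕ => |h k| * x ^ k :=
  stmt19_general q φ h hq hGevrey hrec
end
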